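/- Let C, C' : List ℕ be two notarized chains (lists of epoch numbers indexed by height), each containing three adjacent blocks with consecutive epochs: h + 2 < C.length with C[h] = e, C[h+1] = e + 1, C[h+2] = e + 2, and k + 2 < C'.length with C'[k] = f, C'[k+1] = f + 1, C'[k+2] = f + 2. Then there exist inconsistent positions, i.e. there exist i < C.length and j < C'.length such that C[i] = C'[j], or (C[i] < C'[j] and j < i), or (C'[j] < C[i] and i < j). -/
import Mathlib


theorem fork_implies_inconsistent_blocks (C C' : List ℕ) (h e k f : ℕ)
    (hh : h + 2 < C.length)
    (hC0 : C[h] = e) (hC1 : C[h + 1] = e + 1) (hC2 : C[h + 2] = e + 2)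
    (hk : k + 2 < C'.length)
    (hC'0 : C'[k] = f) (hC'1 : C'[k + 1] = f + 1) (hC'2 : C'[k + 2] = f + 2) :
    ∃ i j, ∃ (hi : i < C.length) (hj : j < C'.length),
      C[i] = C'[j] ∨ (C[i] < C'[j] ∧ j < i) ∨ (C'[j] < C[i] ∧ i < j) := by
  by_contra hcon
  push_neg at hcon
  have key : ∀ i j (hi : i < C.length) (hj : j < C'.length), i < j → C[i] < C'[j] := by
    intro i j hi hj hij
    obtain ⟨h1, h2, h3⟩ := hcon i j hi hj
    rcases lt_trichotomy (C[i]) (C'[j]) with hlt | heq | hgt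
    · exact hlt
    · exact absurd heq h1
    · have := h3 hgt; omega
  have key2 : ∀ i j (hi : i < C.length) (hj : j < C'.length), j < i → C'[j] < C[i] := by
    intro i j hi hj hij
    obtain ⟨h1, h2, h3⟩ := hcon i j hi hj
    rcases lt_trichotomy (C[i]) (C'[j]) with hlt | heq | hgt
    · have := h2 hlt; omega
    · exact absurd heq h1
    · exact hgt
  by_cases hcase : h + 1 < C'.length
  · have a1 := key h (h + 1) (by omega) hcase (by omega)
    have a2 := key2 (h + 2) (h + 1) (by omega) hcase (by omega)
    have a3 := (hcon (h + 1) (h + 1) (by omega) hcase).1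
    rw [hC0] at a1
    rw [hC2] at a2
    rw [hC1] at a3
    omega
  · have hle : k + 1 < C.length := by omega
    have b1 := key2 (k + 1) k hle (by omega) (by omega)
    have b2 := key (k + 1) (k + 2) hle (by omega) (by omega)
    have b3 := (hcon (k + 1) (k + 1) hle (by omega)).1
    rw [hC'0] at b1
    rw [hC'2] at b2
    rw [hC'1] at b3
    omega
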